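/- arXiv:2403.14178 — 2 statements merged into one kernel-verified Lean document; each statement's English description precedes it below -/
import Mathlib

section
/- For all positive real parameters α, β, ξ and all stresses m ∈ ℝ², τ ∈ ℝ^{2×2}, the strains (χ, γ) = S(m, τ) satisfy Q(χ, γ) < 1 (so T(χ, γ) is defined) and T(S(m, τ)) = (m, τ). -/
noncomputable section

/-- The quadratic form `Q(χ, γ)` on strains. -/
def Qform (α β ξ : ℝ) (χ : Fin 2 → ℝ) (γ : Fin 2 → Fin 2 → ℝ) : ℝ :=
  β ^ 2 * (α ^ 2 * ((χ 0) ^ 2 + (χ 1) ^ 2) +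
    ξ ^ 2 * ((γ 0 0) ^ 2 + (γ 0 1) ^ 2 + (γ 1 0) ^ 2 + (γ 1 1) ^ 2))

/-- The quadratic form `Q*(m, τ)` on stresses. -/
def Qstar (α β ξ : ℝ) (m : Fin 2 → ℝ) (τ : Fin 2 → Fin 2 → ℝ) : ℝ :=
  β ^ 2 * (((m 0) ^ 2 + (m 1) ^ 2) / α ^ 2 +
    ((τ 0 0) ^ 2 + (τ 0 1) ^ 2 + (τ 1 0) ^ 2 + (τ 1 1) ^ 2) / ξ ^ 2)

/-- The strain-limiting constitutive map `S` sending stresses to strains. -/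
def Smap (α β ξ : ℝ) (m : Fin 2 → ℝ) (τ : Fin 2 → Fin 2 → ℝ) :
    (Fin 2 → ℝ) × (Fin 2 → Fin 2 → ℝ) :=
  (fun i => m i / (α ^ 2 * (1 + Real.sqrt (Qstar α β ξ m τ))),
   fun i j => τ i j / (ξ ^ 2 * (1 + Real.sqrt (Qstar α β ξ m τ))))

/-- The inverse constitutive map `T` sending strains to stresses. -/
def Tmap (α β ξ : ℝ) (χ : Fin 2 → ℝ) (γ : Fin 2 → Fin 2 → ℝ) :
    (Fin 2 → ℝ) × (Fin 2 → Fin 2 → ℝ) :=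
  (fun i => α ^ 2 * χ i / (1 - Real.sqrt (Qform α β ξ χ γ)),
   fun i j => ξ ^ 2 * γ i j / (1 - Real.sqrt (Qform α β ξ χ γ)))

/-- The strain-energy density `W(χ, γ)`. -/
def Wdens (α β ξ : ℝ) (χ : Fin 2 → ℝ) (γ : Fin 2 → Fin 2 → ℝ) : ℝ :=
  -(1 / β ^ 2) * (Real.sqrt (Qform α β ξ χ γ) +
    Real.log (1 - Real.sqrt (Qform α β ξ χ γ)))

/-- The complementary strain-energy density `W*(m, τ)`. -/
def Wstar (α β ξ : ℝ) (m : Fin 2 → ℝ) (τ : Fin 2 → Fin 2 → ℝ) : ℝ :=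
  (1 / β ^ 2) * (Real.sqrt (Qstar α β ξ m τ) -
    Real.log (1 + Real.sqrt (Qstar α β ξ m τ)))

/-! Writing `s = √(Q*(m, τ))`, the map `S` is the compliance `(m / α², τ / ξ²)` scaled by
`1 / (1 + s)`, so `Q(S(m, τ)) = s² / (1 + s)² < 1` and `1 - √Q = 1 / (1 + s)`, which is exactly
the factor `T` divides by to undo that scaling. -/

lemma Qstar_nonneg (α β ξ : ℝ) (m : Fin 2 → ℝ) (τ : Fin 2 → Fin 2 → ℝ) :
    0 ≤ Qstar α β ξ m τ := by
  unfold Qstar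
  positivity

lemma Real.sqrt_div_sq_one_add_sqrt (q : ℝ) : √(q / (1 + √q) ^ 2) = √q / (1 + √q) := by
  rw [Real.sqrt_div' _ (by positivity), Real.sqrt_sq (by positivity)]

lemma Real.div_sq_one_add_sqrt_lt_one {q : ℝ} (hq : 0 ≤ q) : q / (1 + √q) ^ 2 < 1 := by
  have hs : 0 ≤ √q := Real.sqrt_nonneg q
  rw [div_lt_one (by positivity)]
  nlinarith [Real.sq_sqrt hq]

section Constitutive

variable {α ξ : ℝ} (hα : α ≠ 0) (hξ : ξ ≠ 0) (β : ℝ) (m : Fin 2 → ℝ) (τ : Fin 2 → Fin 2 → ℝ)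
include hα hξ

lemma Qform_Smap :
    Qform α β ξ (Smap α β ξ m τ).1 (Smap α β ξ m τ).2 =
      Qstar α β ξ m τ / (1 + √(Qstar α β ξ m τ)) ^ 2 := by
  have hs : 0 < 1 + √(Qstar α β ξ m τ) := by positivity
  simp only [Qform, Smap, Qstar]
  field_simp

lemma Qform_Smap_lt_one : Qform α β ξ (Smap α β ξ m τ).1 (Smap α β ξ m τ).2 < 1 := by
  rw [Qform_Smap hα hξ]
  exact Real.div_sq_one_add_sqrt_lt_one (Qstar_nonneg α β ξ m τ)

lemma Tmap_Smap : Tmap α β ξ (Smap α β ξ m τ).1 (Smap α β ξ m τ).2 = (m, τ) := by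
  have hs : 0 < 1 + √(Qstar α β ξ m τ) := by positivity
  have hden : 1 - √(Qstar α β ξ m τ) / (1 + √(Qstar α β ξ m τ)) =
      1 / (1 + √(Qstar α β ξ m τ)) := by
    field_simp
    ring
  rw [Tmap, Qform_Smap hα hξ, Real.sqrt_div_sq_one_add_sqrt, hden]
  ext <;> simp only [Smap] <;> field_simp

end Constitutive

theorem T_of_S_general (α β ξ : ℝ) (hα : 0 < α) (hξ : 0 < ξ)
    (m : Fin 2 → ℝ) (τ : Fin 2 → Fin 2 → ℝ) :
    Qform α β ξ (Smap α β ξ m τ).1 (Smap α β ξ m τ).2 < 1 ∧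
      Tmap α β ξ (Smap α β ξ m τ).1 (Smap α β ξ m τ).2 = (m, τ) :=
  ⟨Qform_Smap_lt_one hα.ne' hξ.ne' β m τ, Tmap_Smap hα.ne' hξ.ne' β m τ⟩

/-- the strains `(χ, γ) = S(m, τ)` satisfy `Q(χ, γ) < 1`
(so `T(χ, γ)` is defined) and `T(S(m, τ)) = (m, τ)`. -/
theorem T_of_S (α β ξ : ℝ) (hα : 0 < α) (hβ : 0 < β) (hξ : 0 < ξ)
    (m : Fin 2 → ℝ) (τ : Fin 2 → Fin 2 → ℝ) :
    Qform α β ξ (Smap α β ξ m τ).1 (Smap α β ξ m τ).2 < 1 ∧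
      Tmap α β ξ (Smap α β ξ m τ).1 (Smap α β ξ m τ).2 = (m, τ) :=
  T_of_S_general α β ξ hα hξ m τ
end
end

section
/- For all positive real parameters α, β, ξ and all strains χ ∈ ℝ², γ ∈ ℝ^{2×2} with Q(χ, γ) < 1, the strain-energy density W is Fréchet differentiable at (χ, γ) (as a function on ℝ² × ℝ^{2×2}), and its derivative is the linear map (a, b) ↦ m₁·a₁ + m₂·a₂ + τ₁₁·b₁₁ + τ₁₂·b₁₂ + τ₂₁·b₂₁ + τ₂₂·b₂₂, where (m, τ) = T(χ, γ); that is, the stresses are the gradients of W (hyperelasticity). -/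
noncomputable section

/-!
Write `W = ψ ∘ √Q` with `ψ s = -(s + log (1 - s)) / β²`, so that `ψ' s = s / (β² (1 - s))`.
Where `Q > 0` the chain rule applies, and the factor `s` in `ψ'` cancels the `1 / (2 √Q)` coming
from the square root, leaving `∇Q / (2 β² (1 - √Q))`, which is `T`. The only strain with `Q = 0` is
the origin; there `√Q` is not differentiable, but it is Lipschitz while `ψ` is flat at `0`
(`ψ' 0 = 0`), so `W` is `o(‖p‖)` and its derivative vanishes, as does `T 0`.
-/

open Asymptotics Filter Topology

theorem HasDerivAt.hasFDerivAt_comp_zero_of_isBigO {E : Type*} [NormedAddCommGroup E]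
    [NormedSpace ℝ E] {ψ : ℝ → ℝ} {N : E → ℝ} {x : E} (hψ : HasDerivAt ψ 0 (N x))
    (hN : (fun y => N y - N x) =O[𝓝 x] (fun y => y - x)) :
    HasFDerivAt (fun y => ψ (N y)) (0 : E →L[ℝ] ℝ) x := by
  have hNx : Tendsto N (𝓝 x) (𝓝 (N x)) :=
    tendsto_sub_nhds_zero_iff.mp (hN.trans_tendsto (tendsto_sub_nhds_zero_iff.mpr tendsto_id))
  refine HasFDerivAt.of_isLittleO ?_
  simpa [Function.comp_def] using (hψ.isLittleO.comp_tendsto hNx).trans_isBigO hN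

abbrev Strain := (Fin 2 → ℝ) × (Fin 2 → Fin 2 → ℝ)

def energyProfile (β s : ℝ) : ℝ := -(1 / β ^ 2) * (s + Real.log (1 - s))

lemma hasDerivAt_energyProfile (β : ℝ) {s : ℝ} (hs : s < 1) :
    HasDerivAt (energyProfile β) (s / (β ^ 2 * (1 - s))) s := by
  have hs' : 1 - s ≠ 0 := by linarith
  refine (((hasDerivAt_id' s).add (((hasDerivAt_id' s).const_sub 1).log hs')).const_mul
    (-(1 / β ^ 2))).congr_deriv ?_
  field_simp
  ring

lemma Qform_nonneg (α β ξ : ℝ) (χ : Fin 2 → ℝ) (γ : Fin 2 → Fin 2 → ℝ) :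
    0 ≤ Qform α β ξ χ γ := by
  unfold Qform; positivity

lemma Qform_le_sq_norm (α β ξ : ℝ) (p : Strain) :
    Qform α β ξ p.1 p.2 ≤ β ^ 2 * (2 * α ^ 2 + 4 * ξ ^ 2) * ‖p‖ ^ 2 := by
  have h1 (i : Fin 2) : p.1 i ^ 2 ≤ ‖p‖ ^ 2 := by
    simpa using pow_le_pow_left₀ (norm_nonneg _) ((norm_le_pi_norm p.1 i).trans (norm_fst_le p)) 2
  have h2 (i j : Fin 2) : p.2 i j ^ 2 ≤ ‖p‖ ^ 2 := by
    simpa using pow_le_pow_left₀ (norm_nonneg _)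
      (((norm_le_pi_norm (p.2 i) j).trans (norm_le_pi_norm p.2 i)).trans (norm_snd_le p)) 2
  calc Qform α β ξ p.1 p.2
      ≤ β ^ 2 * (α ^ 2 * (‖p‖ ^ 2 + ‖p‖ ^ 2) +
          ξ ^ 2 * (‖p‖ ^ 2 + ‖p‖ ^ 2 + ‖p‖ ^ 2 + ‖p‖ ^ 2)) := by
        unfold Qform
        gcongr β ^ 2 * (α ^ 2 * (?_ + ?_) + ξ ^ 2 * (?_ + ?_ + ?_ + ?_))
        all_goals first | exact h1 _ | exact h2 _ _
    _ = _ := by ring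

lemma sqrt_Qform_isBigO (α β ξ : ℝ) :
    (fun p : Strain => √(Qform α β ξ p.1 p.2)) =O[𝓝 0] (fun p => p) := by
  refine IsBigO.of_bound √(β ^ 2 * (2 * α ^ 2 + 4 * ξ ^ 2)) (Eventually.of_forall fun p => ?_)
  rw [Real.norm_of_nonneg (Real.sqrt_nonneg _), ← Real.sqrt_sq (norm_nonneg p),
    ← Real.sqrt_mul (by positivity)]
  exact Real.sqrt_le_sqrt (Qform_le_sq_norm α β ξ p)

lemma eq_zero_of_Qform_eq_zero {α β ξ : ℝ} (hα : α ≠ 0) (hβ : β ≠ 0) (hξ : ξ ≠ 0)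
    {χ : Fin 2 → ℝ} {γ : Fin 2 → Fin 2 → ℝ} (h : Qform α β ξ χ γ = 0) : χ = 0 ∧ γ = 0 := by
  simp (disch := positivity) only [Qform, mul_eq_zero, add_eq_zero_iff_of_nonneg,
    pow_eq_zero_iff two_ne_zero, hα, hβ, hξ, false_or] at h
  obtain ⟨⟨h0, h1⟩, ⟨⟨h00, h01⟩, h10⟩, h11⟩ := h
  exact ⟨funext <| Fin.forall_fin_two.2 ⟨h0, h1⟩,
    funext <| Fin.forall_fin_two.2 ⟨funext <| Fin.forall_fin_two.2 ⟨h00, h01⟩,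
      funext <| Fin.forall_fin_two.2 ⟨h10, h11⟩⟩⟩

open ContinuousLinearMap in
def stressPairing (σ : Strain) : Strain →L[ℝ] ℝ :=
  ∑ i, σ.1 i • (proj i ∘L fst ℝ _ _) + ∑ i, ∑ j, σ.2 i j • (proj j ∘L proj i ∘L snd ℝ _ _)

lemma stressPairing_apply (σ : Strain) (a : Fin 2 → ℝ) (b : Fin 2 → Fin 2 → ℝ) :
    stressPairing σ (a, b) = σ.1 0 * a 0 + σ.1 1 * a 1 +
      σ.2 0 0 * b 0 0 + σ.2 0 1 * b 0 1 + σ.2 1 0 * b 1 0 + σ.2 1 1 * b 1 1 := by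
  simp [stressPairing, Fin.sum_univ_two]
  ring

open ContinuousLinearMap in
lemma hasFDerivAt_Qform (α β ξ : ℝ) (p : Strain) :
    HasFDerivAt (fun q : Strain => Qform α β ξ q.1 q.2)
      ((2 * β ^ 2) • stressPairing (α ^ 2 • p.1, ξ ^ 2 • p.2)) p := by
  have h1 (i : Fin 2) : HasFDerivAt (fun q : Strain => q.1 i) (proj (R := ℝ) i ∘L fst ℝ _ _) p :=
    (proj (R := ℝ) i ∘L fst ℝ (Fin 2 → ℝ) (Fin 2 → Fin 2 → ℝ)).hasFDerivAt
  have h2 (i j : Fin 2) :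
      HasFDerivAt (fun q : Strain => q.2 i j) (proj (R := ℝ) j ∘L proj i ∘L snd ℝ _ _) p :=
    (proj (R := ℝ) j ∘L proj i ∘L snd ℝ (Fin 2 → ℝ) (Fin 2 → Fin 2 → ℝ)).hasFDerivAt
  refine (((((h1 0).pow 2).add ((h1 1).pow 2)).const_mul (α ^ 2)).add
    ((((((h2 0 0).pow 2).add ((h2 0 1).pow 2)).add ((h2 1 0).pow 2)).add
      ((h2 1 1).pow 2)).const_mul (ξ ^ 2))).const_mul (β ^ 2)
    |>.congr_fderiv (ContinuousLinearMap.ext fun ⟨a, b⟩ => ?_)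
  simp [stressPairing_apply]
  ring

lemma hasFDerivAt_Wdens_zero (α β ξ : ℝ) :
    HasFDerivAt (fun p : Strain => Wdens α β ξ p.1 p.2) (0 : Strain →L[ℝ] ℝ) 0 := by
  have hQ0 : Qform α β ξ 0 0 = 0 := by simp [Qform]
  refine HasDerivAt.hasFDerivAt_comp_zero_of_isBigO (ψ := energyProfile β)
    (N := fun p : Strain => √(Qform α β ξ p.1 p.2)) ?_ ?_
  · simpa [hQ0] using hasDerivAt_energyProfile β zero_lt_one
  · simpa [hQ0] using sqrt_Qform_isBigO α β ξ

lemma hasFDerivAt_Wdens_of_pos {α β ξ : ℝ} (hβ : β ≠ 0) {χ : Fin 2 → ℝ} {γ : Fin 2 → Fin 2 → ℝ}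
    (hQ0 : 0 < Qform α β ξ χ γ) (hQ : Qform α β ξ χ γ < 1) :
    HasFDerivAt (fun p : Strain => Wdens α β ξ p.1 p.2)
      (stressPairing (Tmap α β ξ χ γ)) (χ, γ) := by
  have hr1 : √(Qform α β ξ χ γ) < 1 := (Real.sqrt_lt' one_pos).2 (by simpa using hQ)
  have hchain := ((hasDerivAt_energyProfile β hr1).comp _
    (Real.hasDerivAt_sqrt hQ0.ne')).comp_hasFDerivAt (χ, γ) (hasFDerivAt_Qform α β ξ (χ, γ))
  refine hchain.congr_fderiv (ContinuousLinearMap.ext fun ⟨a, b⟩ => ?_)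
  have hr1' : 1 - √(Qform α β ξ χ γ) ≠ 0 := by linarith
  simp [stressPairing_apply, Tmap]
  field_simp

/-- hyperelasticity. For strains with `Q(χ, γ) < 1`, the
strain-energy density `W` is Fréchet differentiable at `(χ, γ)`, and its
derivative is the linear map `(a, b) ↦ Σᵢ mᵢ·aᵢ + Σᵢⱼ τᵢⱼ·bᵢⱼ` where
`(m, τ) = T(χ, γ)`. -/
theorem hasFDerivAt_Wdens (α β ξ : ℝ) (hα : 0 < α) (hβ : 0 < β) (hξ : 0 < ξ)
    (χ : Fin 2 → ℝ) (γ : Fin 2 → Fin 2 → ℝ) (hQ : Qform α β ξ χ γ < 1) :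
    ∃ L : ((Fin 2 → ℝ) × (Fin 2 → Fin 2 → ℝ)) →L[ℝ] ℝ,
      HasFDerivAt
        (fun p : (Fin 2 → ℝ) × (Fin 2 → Fin 2 → ℝ) => Wdens α β ξ p.1 p.2) L (χ, γ) ∧
      ∀ (a : Fin 2 → ℝ) (b : Fin 2 → Fin 2 → ℝ),
        L (a, b) =
          (Tmap α β ξ χ γ).1 0 * a 0 + (Tmap α β ξ χ γ).1 1 * a 1 +
          (Tmap α β ξ χ γ).2 0 0 * b 0 0 + (Tmap α β ξ χ γ).2 0 1 * b 0 1 +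
          (Tmap α β ξ χ γ).2 1 0 * b 1 0 + (Tmap α β ξ χ γ).2 1 1 * b 1 1 := by
  refine ⟨stressPairing (Tmap α β ξ χ γ), ?_, stressPairing_apply _⟩
  rcases (Qform_nonneg α β ξ χ γ).eq_or_lt with hQ0 | hQ0
  · obtain ⟨rfl, rfl⟩ := eq_zero_of_Qform_eq_zero hα.ne' hβ.ne' hξ.ne' hQ0.symm
    simpa [Tmap, stressPairing, Prod.mk_zero_zero] using hasFDerivAt_Wdens_zero α β ξ
  · exact hasFDerivAt_Wdens_of_pos hβ.ne' hQ0 hQ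
end
end
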